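/- arXiv:2509.06481 — 3 statements merged into one kernel-verified Lean document; each statement's English description precedes it below -/
import Mathlib

section
/- The event-driven max-consensus process (where a vertex broadcasts only when its value changed in the previous round) produces exactly the same value trajectories x_v(t) for all vertices and all times as the always-broadcast max-consensus process, starting from the same initial values on the same graph. -/
/-!
A vertex that stays silent at round `t` holds the value it last broadcast at some earlier
round `s ≤ t`, and each neighbour already absorbed that value at round `s + 1 ≤ t + 1`.
Since all values are nondecreasing in time, restricting the maximum to the broadcasting
neighbours loses nothing: the event-driven values obey the always-broadcast recursion, and
two trajectories with the same recursion and the same initial values coincide.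
-/

theorem Finset.fold_max_le_fold_max_of_subset {ι α : Type*} [LinearOrder α] {s t : Finset ι}
    (hst : s ⊆ t) (b : α) (f : ι → α) : s.fold max b f ≤ t.fold max b f :=
  (Finset.fold_max_le _).2
    ⟨(Finset.le_fold_max _).2 (Or.inl le_rfl),
      fun i hi => (Finset.le_fold_max _).2 (Or.inr ⟨i, hst hi, le_rfl⟩)⟩

namespace MaxConsensus

variable {V α : Type*} [LinearOrder α] {x : V → ℕ → α}

theorem monotone_of_step_eq_fold_max {S : V → ℕ → Finset V}
    (hx : ∀ v t, x v (t + 1) = (S v t).fold max (x v t) (fun u => x u t)) (v : V) :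
    Monotone (x v) :=
  monotone_nat_of_le_succ fun t => (hx v t).symm ▸ (Finset.le_fold_max _).2 (Or.inl le_rfl)

theorem exists_broadcast_eq {B : V → ℕ → Bool} (hB0 : ∀ v, B v 0 = true)
    (hB : ∀ v t, B v (t + 1) = decide (x v (t + 1) ≠ x v t)) (v : V) (t : ℕ) :
    ∃ s ≤ t, B v s = true ∧ x v s = x v t := by
  induction t with
  | zero => exact ⟨0, le_rfl, hB0 v, rfl⟩
  | succ t ih =>
    by_cases hbroadcast : B v (t + 1) = true
    · exact ⟨t + 1, le_rfl, hbroadcast, rfl⟩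
    · have hsilent : x v (t + 1) = x v t := by simpa [hB] using hbroadcast
      obtain ⟨s, hst, hBs, hxs⟩ := ih
      exact ⟨s, hst.trans t.le_succ, hBs, hxs.trans hsilent.symm⟩

theorem event_driven_step_eq_fold_max (N : V → Finset V) {B : V → ℕ → Bool}
    (hB0 : ∀ v, B v 0 = true) (hB : ∀ v t, B v (t + 1) = decide (x v (t + 1) ≠ x v t))
    (hx : ∀ v t, x v (t + 1) = ((N v).filter (fun u => B u t)).fold max (x v t) (fun u => x u t))
    (v : V) (t : ℕ) :
    x v (t + 1) = (N v).fold max (x v t) (fun u => x u t) := by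
  have hmono := monotone_of_step_eq_fold_max hx
  refine le_antisymm ((hx v t).trans_le
    (Finset.fold_max_le_fold_max_of_subset (Finset.filter_subset _ _) _ _)) ?_
  refine (Finset.fold_max_le _).2 ⟨hmono v t.le_succ, fun u hu => ?_⟩
  obtain ⟨s, hst, hBs, hxs⟩ := exists_broadcast_eq hB0 hB u t
  have hreceived : x u s ≤ x v (s + 1) :=
    (hx v s).symm ▸
      (Finset.le_fold_max _).2 (Or.inr ⟨u, Finset.mem_filter.2 ⟨hu, hBs⟩, le_rfl⟩)
  calc x u t = x u s := hxs.symm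
    _ ≤ x v (s + 1) := hreceived
    _ ≤ x v (t + 1) := hmono v (Nat.succ_le_succ hst)

end MaxConsensus

theorem event_driven_eq_always_broadcast_general
    {V : Type} [Fintype V]
    (G : SimpleGraph V) [DecidableRel G.Adj]
    (x y : V → ℕ → ℝ) (B : V → ℕ → Bool)
    (hinit : ∀ v, x v 0 = y v 0)
    (hy : ∀ v t, y v (t + 1) =
      (G.neighborFinset v).fold max (y v t) (fun u => y u t))
    (hB0 : ∀ v, B v 0 = true)
    (hB : ∀ v t, B v (t + 1) = decide (x v (t + 1) ≠ x v t))
    (hx : ∀ v t, x v (t + 1) =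
      ((G.neighborFinset v).filter (fun u => B u t)).fold max (x v t)
        (fun u => x u t)) :
    ∀ v t, x v t = y v t := by
  intro v t
  induction t generalizing v with
  | zero => exact hinit v
  | succ t ih =>
    rw [MaxConsensus.event_driven_step_eq_fold_max _ hB0 hB hx, hy]
    simp only [ih]

/-- The event-driven max-consensus process (broadcast only on
change, everyone broadcasting at round 0) has exactly the same value
trajectories as the always-broadcast max-consensus process from the same
initial values on the same graph. -/
theorem event_driven_eq_always_broadcast
    {V : Type} [Fintype V] [DecidableEq V]
    (G : SimpleGraph V) [DecidableRel G.Adj]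
    (x y : V → ℕ → ℝ) (B : V → ℕ → Bool)
    (hinit : ∀ v, x v 0 = y v 0)
    (hy : ∀ v t, y v (t + 1) =
      (G.neighborFinset v).fold max (y v t) (fun u => y u t))
    (hB0 : ∀ v, B v 0 = true)
    (hB : ∀ v t, B v (t + 1) = decide (x v (t + 1) ≠ x v t))
    (hx : ∀ v t, x v (t + 1) =
      ((G.neighborFinset v).filter (fun u => B u t)).fold max (x v t)
        (fun u => x u t)) :
    ∀ v t, x v t = y v t :=
  event_driven_eq_always_broadcast_general G x y B hinit hy hB0 hB hx
end

section
/- In the event-driven consensus process on a connected graph of diameter D where one fixed agent-task pair (i*, j*) holds the globally highest bid that never changes thereafter (Statements 2–3), the assignment z and bid y for task j* held by every agent agree with (i*, y_{i*j*}) after at most D additional rounds, even though i* stops broadcasting once its information is unchanged. -/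
/-!
Bids only grow, since each agent takes the maximum of its own bid and the broadcast ones, and no
bid ever exceeds `M`. The current bid of an agent has always been broadcast at some earlier round:
it is broadcast at `t0`, and afterwards again in the round after every change. Hence a bid of at
least `c` held by `u` reaches every neighbour one round later, and a shortest path from `i*` carries
`M` to every agent within `D` rounds. Winners travel with their bids, so an agent whose bid is `M`
has winner `i*`.
-/

namespace EventDriven

section Dynamics

variable {V : Type} [Fintype V] (G : SimpleGraph V) [DecidableRel G.Adj]

def BidUpdate (y : V → ℕ → ℝ) (B : V → ℕ → Bool) (t0 : ℕ) : Prop :=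
  ∀ v t, t0 ≤ t → y v (t + 1) =
    ((G.neighborFinset v).filter (fun u => B u t)).fold max (y v t) (fun u => y u t)

def WinnerUpdate (y : V → ℕ → ℝ) (z : V → ℕ → Option V) (B : V → ℕ → Bool) (t0 : ℕ) : Prop :=
  ∀ v t, t0 ≤ t →
    (y v (t + 1) = y v t → z v (t + 1) = z v t) ∧
    (y v (t + 1) ≠ y v t → ∃ u ∈ (G.neighborFinset v).filter (fun u => B u t),
      y u t = y v (t + 1) ∧ z v (t + 1) = z u t)

variable {G} {y : V → ℕ → ℝ} {z : V → ℕ → Option V} {B : V → ℕ → Bool} {t0 : ℕ}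

namespace BidUpdate

theorem le_succ (hy : BidUpdate G y B t0) {v : V} {t : ℕ} (ht : t0 ≤ t) :
    y v t ≤ y v (t + 1) := by
  rw [hy v t ht, Finset.le_fold_max]
  exact Or.inl le_rfl

theorem le_of_le (hy : BidUpdate G y B t0) {v : V} {s t : ℕ} (hs : t0 ≤ s) (hst : s ≤ t) :
    y v s ≤ y v t := by
  induction t, hst using Nat.le_induction with
  | base => exact le_rfl
  | succ t hst ih => exact ih.trans (hy.le_succ (hs.trans hst))

theorem le_of_forall_le (hy : BidUpdate G y B t0) {M : ℝ} (hM : ∀ v, y v t0 ≤ M) {t : ℕ}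
    (ht : t0 ≤ t) (v : V) : y v t ≤ M := by
  induction t, ht using Nat.le_induction generalizing v with
  | base => exact hM v
  | succ t ht ih =>
    rw [hy v t ht, Finset.fold_max_le]
    exact ⟨ih v, fun u _ => ih u⟩

theorem le_succ_of_adj (hy : BidUpdate G y B t0) {v w : V} {t : ℕ} (ht : t0 ≤ t)
    (hvw : G.Adj v w) (hw : B w t = true) : y w t ≤ y v (t + 1) := by
  rw [hy v t ht, Finset.le_fold_max]
  exact Or.inr ⟨w, by simp [hvw, hw], le_rfl⟩

end BidUpdate

theorem WinnerUpdate.eq_of_bid_eq (hz : WinnerUpdate G y z B t0) {c : ℝ} {w : Option V}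
    (h0 : ∀ v, y v t0 = c → z v t0 = w) {t : ℕ} (ht : t0 ≤ t) (v : V) (hv : y v t = c) :
    z v t = w := by
  induction t, ht using Nat.le_induction generalizing v with
  | base => exact h0 v hv
  | succ t ht ih =>
    by_cases hchange : y v (t + 1) = y v t
    · rw [(hz v t ht).1 hchange]
      exact ih v (hchange.symm.trans hv)
    · obtain ⟨u, -, hyu, hzu⟩ := (hz v t ht).2 hchange
      rw [hzu]
      exact ih u (hyu.trans hv)

end Dynamics

def EventDrivenBroadcast {V : Type} [DecidableEq V] (y : V → ℕ → ℝ) (z : V → ℕ → Option V)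
    (B : V → ℕ → Bool) (t0 : ℕ) : Prop :=
  (∀ v, B v t0 = true) ∧
    ∀ v t, t0 ≤ t → B v (t + 1) = decide (y v (t + 1) ≠ y v t ∨ z v (t + 1) ≠ z v t)

theorem EventDrivenBroadcast.exists_broadcast_eq {V : Type} [DecidableEq V]
    {y : V → ℕ → ℝ} {z : V → ℕ → Option V} {B : V → ℕ → Bool} {t0 : ℕ}
    (hB : EventDrivenBroadcast y z B t0) (v : V) {t : ℕ} (ht : t0 ≤ t) :
    ∃ s, t0 ≤ s ∧ s ≤ t ∧ y v s = y v t ∧ B v s = true := by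
  induction t, ht using Nat.le_induction with
  | base => exact ⟨t0, le_rfl, le_rfl, rfl, hB.1 v⟩
  | succ t ht ih =>
    by_cases hchange : y v (t + 1) = y v t
    · obtain ⟨s, hs, hst, hys, hBs⟩ := ih
      exact ⟨s, hs, hst.trans t.le_succ, hys.trans hchange.symm, hBs⟩
    · refine ⟨t + 1, ht.trans t.le_succ, le_rfl, rfl, ?_⟩
      rw [hB.2 v t ht]
      exact decide_eq_true (Or.inl hchange)

theorem le_bid_of_walk {V : Type} [Fintype V] [DecidableEq V] {G : SimpleGraph V}
    [DecidableRel G.Adj] {y : V → ℕ → ℝ} {z : V → ℕ → Option V} {B : V → ℕ → Bool} {t0 : ℕ}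
    (hy : BidUpdate G y B t0) (hB : EventDrivenBroadcast y z B t0)
    {c : ℝ} {u v : V} (p : G.Walk u v) {t : ℕ} (ht : t0 ≤ t) (hc : c ≤ y u t) :
    c ≤ y v (t + p.length) := by
  induction p generalizing t with
  | nil => exact hc
  | @cons u w v huw p ih =>
    obtain ⟨s, hs, hst, hys, hBs⟩ := hB.exists_broadcast_eq u ht
    have hw : c ≤ y w (t + 1) := calc
      c ≤ y u s := hys ▸ hc
      _ ≤ y w (s + 1) := hy.le_succ_of_adj hs huw.symm hBs
      _ ≤ y w (t + 1) := hy.le_of_le (hs.trans s.le_succ) (Nat.succ_le_succ hst)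
    rw [SimpleGraph.Walk.length_cons, Nat.add_comm p.length 1, ← Nat.add_assoc]
    exact ih (ht.trans t.le_succ) hw

end EventDriven

open EventDriven in
/-- Event-driven propagation of the winning (bid, winner) pair
for one task `j*` on a connected graph of diameter `D`.  Agent `istar` holds
the maximal bid `M` (with winner `istar`) from time `t0` on; agents adopt a
received pair when its bid strictly exceeds their own, and broadcast exactly
when their stored pair changed in the previous round (everyone broadcasting at
`t0`).  Within `D` additional rounds every agent stores `(M, istar)`. -/
theorem event_driven_bid_propagation
    {V : Type} [Fintype V] [DecidableEq V]
    (G : SimpleGraph V) [DecidableRel G.Adj] (hconn : G.Connected)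
    (D : ℕ) (hD : ∀ u v : V, G.dist u v ≤ D)
    (t0 : ℕ) (y : V → ℕ → ℝ) (z : V → ℕ → Option V) (B : V → ℕ → Bool)
    (istar : V) (M : ℝ)
    -- `istar` holds the maximal bid with itself as winner at time `t0`
    (histar : y istar t0 = M ∧ z istar t0 = some istar)
    (hmaxbid : ∀ v, y v t0 ≤ M)
    (htie : ∀ v, y v t0 = M → z v t0 = some istar)
    -- value update: adopt the largest broadcast bid if it exceeds one's own
    (hy : ∀ v t, t0 ≤ t → y v (t + 1) =
      ((G.neighborFinset v).filter (fun u => B u t)).fold max (y v t)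
        (fun u => y u t))
    -- the winner is adopted together with the bid
    (hz : ∀ v t, t0 ≤ t →
      (y v (t + 1) = y v t → z v (t + 1) = z v t) ∧
      (y v (t + 1) ≠ y v t → ∃ u ∈ (G.neighborFinset v).filter (fun u => B u t),
        y u t = y v (t + 1) ∧ z v (t + 1) = z u t))
    -- event-driven broadcasting
    (hB0 : ∀ v, B v t0 = true)
    (hB : ∀ v t, t0 ≤ t →
      B v (t + 1) = decide (y v (t + 1) ≠ y v t ∨ z v (t + 1) ≠ z v t)) :
    ∀ t, t0 + D ≤ t → ∀ v, y v t = M ∧ z v t = some istar := by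
  have hbid : BidUpdate G y B t0 := hy
  have hwinner : WinnerUpdate G y z B t0 := hz
  have hbroadcast : EventDrivenBroadcast y z B t0 := ⟨hB0, hB⟩
  intro t ht v
  obtain ⟨p, hp⟩ := hconn.exists_walk_length_eq_dist istar v
  have hreach : M ≤ y v t := calc
    M ≤ y v (t0 + p.length) := le_bid_of_walk hbid hbroadcast p le_rfl histar.1.ge
    _ ≤ y v t := hbid.le_of_le (Nat.le_add_right _ _) (by have := hD istar v; omega)
  have hM : y v t = M := le_antisymm (hbid.le_of_forall_le hmaxbid (by omega) v) hreach
  exact ⟨hM, hwinner.eq_of_bid_eq htie (by omega) v hM⟩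
end

section
/- In the event-driven broadcast protocol, the total number of broadcasts by any single vertex over the whole run is at most 1 plus the number of times its stored value changes; since in max-consensus each vertex's value can change at most (number of distinct initial values − 1) times, the total number of broadcasts is at most |V| · (number of distinct initial values). -/
/-!
At a time `t + 1` a vertex broadcasts exactly when its value changes, and values never decrease,
so the values of `x v` at the broadcast times of `v` are pairwise distinct. A max-update only
copies existing values, so every value ever held is an initial value; hence each vertex
broadcasts at most `m` times.
-/

theorem Finset.fold_max_mem_insert_image {α β : Type*} [LinearOrder β]
    (s : Finset α) (f : α → β) (b : β) : s.fold max b f ∈ insert b (s.image f) := by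
  classical
  induction s using Finset.induction_on with
  | empty => simp
  | insert a s ha ih =>
    rw [Finset.fold_insert ha, Finset.image_insert, Finset.insert_comm]
    rcases max_choice (f a) (s.fold max b f) with h | h <;> rw [h]
    · exact Finset.mem_insert_self _ _
    · exact Finset.mem_insert_of_mem ih

theorem Monotone.strictMonoOn_of_ne_pred {β : Type*} [PartialOrder β] {f : ℕ → β}
    (hf : Monotone f) {S : Set ℕ} (hS : ∀ t, t + 1 ∈ S → f (t + 1) ≠ f t) :
    StrictMonoOn f S := by
  intro t _ t' ht' hlt
  obtain ⟨s, rfl⟩ := Nat.exists_eq_add_of_lt hlt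
  calc f t ≤ f (t + s) := hf (Nat.le_add_right t s)
    _ < f (t + s + 1) := (hf (Nat.le_succ _)).lt_of_ne' (hS _ ht')

section MaxConsensus

variable {V α : Type*} [LinearOrder α] (nbrs : V → ℕ → Finset V) (x : V → ℕ → α)

theorem monotone_of_fold_max_update
    (hx : ∀ v t, x v (t + 1) = (nbrs v t).fold max (x v t) (fun u => x u t)) (v : V) :
    Monotone (x v) :=
  monotone_nat_of_le_succ fun t => by
    rw [hx v t]
    exact (Finset.le_fold_max _).mpr (Or.inl le_rfl)

theorem mem_range_initial_of_fold_max_update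
    (hx : ∀ v t, x v (t + 1) = (nbrs v t).fold max (x v t) (fun u => x u t)) (t : ℕ) (v : V) :
    x v t ∈ Set.range (fun u => x u 0) := by
  induction t generalizing v with
  | zero => exact ⟨v, rfl⟩
  | succ t ih =>
    have hmem := Finset.fold_max_mem_insert_image (nbrs v t) (fun u => x u t) (x v t)
    rw [← hx v t, Finset.mem_insert, Finset.mem_image] at hmem
    rcases hmem with h | ⟨u, -, h⟩
    · exact h ▸ ih v
    · exact h ▸ ih u

end MaxConsensus

theorem card_broadcast_times_le_card_initial_values {V α : Type*} [Fintype V] [LinearOrder α]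
    (x : V → ℕ → α) (hmono : ∀ v, Monotone (x v))
    (hrange : ∀ t v, x v t ∈ Set.range (fun u => x u 0))
    (B : V → ℕ → Bool) (hB : ∀ v t, B v (t + 1) = decide (x v (t + 1) ≠ x v t))
    (v : V) (N : ℕ) :
    ((Finset.range N).filter (fun t => B v t)).card ≤
      (Finset.univ.image (fun u : V => x u 0)).card := by
  have hinj : Set.InjOn (x v) {t | B v t} :=
    ((hmono v).strictMonoOn_of_ne_pred fun t ht => by simpa [hB] using ht).injOn
  refine Finset.card_le_card_of_injOn (x v) (fun t _ => ?_) (hinj.mono fun t ht => ?_)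
  · obtain ⟨u, hu⟩ := hrange t v
    exact Finset.mem_image.mpr ⟨u, Finset.mem_univ u, hu⟩
  · exact (Finset.mem_filter.mp ht).2

theorem event_driven_broadcast_count_general
    {V : Type} [Fintype V]
    (G : SimpleGraph V) [DecidableRel G.Adj]
    (x : V → ℕ → ℝ) (B : V → ℕ → Bool)
    (hB : ∀ v t, B v (t + 1) = decide (x v (t + 1) ≠ x v t))
    (hx : ∀ v t, x v (t + 1) =
      ((G.neighborFinset v).filter (fun u => B u t)).fold max (x v t)
        (fun u => x u t)) :
    ∀ N : ℕ, ∑ v : V, ((Finset.range N).filter (fun t => B v t)).card ≤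
      Fintype.card V * (Finset.univ.image (fun u : V => x u 0)).card := by
  intro N
  have hmono := monotone_of_fold_max_update _ x hx
  have hrange := mem_range_initial_of_fold_max_update _ x hx
  calc ∑ v : V, ((Finset.range N).filter (fun t => B v t)).card
      ≤ ∑ _v : V, (Finset.univ.image (fun u : V => x u 0)).card :=
        Finset.sum_le_sum fun v _ =>
          card_broadcast_times_le_card_initial_values x hmono hrange B hB v N
    _ = Fintype.card V * (Finset.univ.image (fun u : V => x u 0)).card := by
        rw [Finset.sum_const, Finset.card_univ, smul_eq_mul]

/-- In the event-driven max-consensus protocol, each vertex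
broadcasts at most `1 +` (number of its value changes) times, and since each
value changes at most `m − 1` times (`m` = number of distinct initial values),
the total number of broadcasts over any horizon is at most `|V| · m`. -/
theorem event_driven_broadcast_count
    {V : Type} [Fintype V] [DecidableEq V]
    (G : SimpleGraph V) [DecidableRel G.Adj]
    (x : V → ℕ → ℝ) (B : V → ℕ → Bool)
    (hB0 : ∀ v, B v 0 = true)
    (hB : ∀ v t, B v (t + 1) = decide (x v (t + 1) ≠ x v t))
    (hx : ∀ v t, x v (t + 1) =
      ((G.neighborFinset v).filter (fun u => B u t)).fold max (x v t)
        (fun u => x u t)) :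
    ∀ N : ℕ, ∑ v : V, ((Finset.range N).filter (fun t => B v t)).card ≤
      Fintype.card V * (Finset.univ.image (fun u : V => x u 0)).card :=
  event_driven_broadcast_count_general G x B hB hx
end
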